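/- arXiv:2102.03245 — 6 statements merged into one kernel-verified Lean document; each statement's English description precedes it below -/
import Mathlib

section
/- Let N ≥ 2, r > 0, p ≥ r with p + (N-1)r = 1, and b^j defined as in the closed form b^j = ((N-1)/(Nr))·(1 - (j+1)(1-r)^j + j(1-r)^(j+1)) + (1/(Nr))·((p-r)^(j+1) - (j+1)(1-r)^j(p-r) + j(1-r)^(j+1)). Then the sequence (b^j)_{j≥1} is strictly increasing provided r < 1 and p < 1 (equivalently, monotone nondecreasing when p ≤ 1). -/
/-!
Since `N r = 1 - (p - r)`, the increment `b^(j+1) - b^j` collapses to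
`(1 - r)^(j+1) - (p - r)^(j+1)`, which is positive because `0 ≤ p - r < 1 - r`.
-/

noncomputable def aoiiMean (N : ℕ) (p r : ℝ) (j : ℕ) : ℝ :=
  ((N - 1 : ℝ) / ((N : ℝ) * r)) *
      (1 - (j + 1 : ℝ) * (1 - r) ^ j + (j : ℝ) * (1 - r) ^ (j + 1)) +
    (1 / ((N : ℝ) * r)) *
      ((p - r) ^ (j + 1) - (j + 1 : ℝ) * (1 - r) ^ j * (p - r) +
        (j : ℝ) * (1 - r) ^ (j + 1))

theorem aoiiMean_succ_sub {N : ℕ} {p r : ℝ} (hsum : p + (N - 1 : ℝ) * r = 1)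
    (hNr : (N : ℝ) * r ≠ 0) (j : ℕ) :
    aoiiMean N p r (j + 1) - aoiiMean N p r j = (1 - r) ^ (j + 1) - (p - r) ^ (j + 1) := by
  have hN : (N : ℝ) ≠ 0 := left_ne_zero_of_mul hNr
  have hr : r ≠ 0 := right_ne_zero_of_mul hNr
  obtain rfl : p = 1 - (N - 1 : ℝ) * r := by linarith
  unfold aoiiMean
  field_simp
  push_cast
  ring

theorem aoiiMean_strictMono {N : ℕ} {p r : ℝ} (hsum : p + (N - 1 : ℝ) * r = 1)
    (hr : 0 < r) (hpr : r ≤ p) (hp1 : p < 1) : StrictMono (aoiiMean N p r) := by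
  have hNr : 0 < (N : ℝ) * r := by linarith
  refine strictMono_nat_of_lt_succ fun j => sub_pos.mp ?_
  rw [aoiiMean_succ_sub hsum hNr.ne', sub_pos]
  exact pow_lt_pow_left₀ (by linarith) (by linarith) j.succ_ne_zero

theorem stmt5_general (N : ℕ) (p r : ℝ) (hr : 0 < r)
    (hpr : r ≤ p) (hp1 : p < 1)
    (hsum : p + (N - 1 : ℝ) * r = 1)
    (b : ℕ → ℝ)
    (hb : ∀ j : ℕ, b j =
      ((N - 1 : ℝ) / ((N : ℝ) * r)) *
        (1 - (j + 1 : ℝ) * (1 - r) ^ j + (j : ℝ) * (1 - r) ^ (j + 1)) +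
      (1 / ((N : ℝ) * r)) *
        ((p - r) ^ (j + 1) - (j + 1 : ℝ) * (1 - r) ^ j * (p - r) +
          (j : ℝ) * (1 - r) ^ (j + 1))) :
    ∀ j : ℕ, 1 ≤ j → b j < b (j + 1) := by
  obtain rfl : b = aoiiMean N p r := funext hb
  exact fun j _ => aoiiMean_strictMono hsum hr hpr hp1 j.lt_succ_self

theorem stmt5 (N : ℕ) (p r : ℝ) (hN : 2 ≤ N) (hr : 0 < r) (hr1 : r < 1)
    (hpr : r ≤ p) (hp1 : p < 1)
    (hsum : p + (N - 1 : ℝ) * r = 1)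
    (b : ℕ → ℝ)
    (hb : ∀ j : ℕ, b j =
      ((N - 1 : ℝ) / ((N : ℝ) * r)) *
        (1 - (j + 1 : ℝ) * (1 - r) ^ j + (j : ℝ) * (1 - r) ^ (j + 1)) +
      (1 / ((N : ℝ) * r)) *
        ((p - r) ^ (j + 1) - (j + 1 : ℝ) * (1 - r) ^ j * (p - r) +
          (j : ℝ) * (1 - r) ^ (j + 1))) :
    ∀ j : ℕ, 1 ≤ j → b j < b (j + 1) :=
  stmt5_general N p r hr hpr hp1 hsum b hb
end

section
/- Fix 0 < ρ ≤ 1 and define, for the AoI metric, the average age under threshold n by ā(n) = ([(n-1)² + (n-1)]ρ² + 2ρ(n-1) + 2)/(2ρ((n-1)ρ + 1)). Then ā(n) = Σ_{j=1}^{∞} j · u(j), where u(j) = ρ/(nρ+1-ρ) for 1 ≤ j ≤ n and u(j) = (1-ρ)^(j-n)·ρ/(nρ+1-ρ) for j > n. -/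
/-!
The distribution `u` is constant, equal to `c = ρ / ((n-1)ρ + 1)`, on `1, …, n` and then decays
geometrically with ratio `q = 1 - ρ`. The mean therefore splits into `c · n(n+1)/2` and the tail
`c · q · ∑ₖ (k + n + 1) qᵏ`, which the series `∑ k qᵏ = q/(1-q)²` and `∑ qᵏ = 1/(1-q)` evaluate.
Substituting `q = 1 - ρ` gives the closed form after clearing denominators.
-/

open Finset

variable {𝕜 : Type*} [NormedField 𝕜]

theorem hasSum_natCast_add_mul_geometric {q : 𝕜} (hq : ‖q‖ < 1) (m : ℕ) :
    HasSum (fun k : ℕ => ((k + m : ℕ) : 𝕜) * q ^ k) (q / (1 - q) ^ 2 + m / (1 - q)) := by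
  simpa [add_mul, div_eq_mul_inv] using (hasSum_coe_mul_geometric_of_norm_lt_one hq).add
    ((hasSum_geometric_of_norm_lt_one hq).mul_left (m : 𝕜))

theorem hasSum_natCast_mul_of_const_then_geometric {q c : 𝕜} (hq : ‖q‖ < 1) {n : ℕ} {u : ℕ → 𝕜}
    (hlow : ∀ j, 1 ≤ j → j ≤ n → u j = c) (hhigh : ∀ j, n < j → u j = q ^ (j - n) * c) :
    HasSum (fun j : ℕ => (j : 𝕜) * u j)
      (c * (n * (n + 1) / 2 : ℕ) + c * q * (q / (1 - q) ^ 2 + (n + 1 : ℕ) / (1 - q))) := by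
  have head : ∑ j ∈ range (n + 1), (j : 𝕜) * u j = c * (n * (n + 1) / 2 : ℕ) := by
    have gauss : ∑ j ∈ range (n + 1), j = n * (n + 1) / 2 := by
      rw [sum_range_id, Nat.add_sub_cancel, mul_comm]
    rw [← gauss, Nat.cast_sum, mul_sum]
    refine sum_congr rfl fun j hj => ?_
    rcases j.eq_zero_or_pos with rfl | hj0
    · simp
    · rw [hlow j hj0 (by simpa [Nat.lt_succ_iff] using hj), mul_comm]
  have tail : ∀ k, ((k + (n + 1) : ℕ) : 𝕜) * u (k + (n + 1))
      = c * q * (((k + (n + 1) : ℕ) : 𝕜) * q ^ k) := by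
    intro k
    rw [hhigh _ (by omega), show k + (n + 1) - n = k + 1 by omega, pow_succ]
    ring
  rw [← hasSum_nat_add_iff' (n + 1), head, add_sub_cancel_left]
  simp_rw [tail]
  exact (hasSum_natCast_add_mul_geometric hq (n + 1)).mul_left (c * q)

theorem stmt9_general (ρ : ℝ) (hρ : 0 < ρ) (hρ1 : ρ ≤ 1) (n : ℕ)
    (u : ℕ → ℝ)
    (hu_low : ∀ j, 1 ≤ j → j ≤ n → u j = ρ / (n * ρ + 1 - ρ))
    (hu_high : ∀ j, n < j → u j = (1 - ρ) ^ (j - n) * ρ / (n * ρ + 1 - ρ)) :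
    ((((n : ℝ) - 1) ^ 2 + ((n : ℝ) - 1)) * ρ ^ 2 + 2 * ρ * ((n : ℝ) - 1) + 2) /
        (2 * ρ * (((n : ℝ) - 1) * ρ + 1))
      = ∑' j : ℕ, (j : ℝ) * u j := by
  have hq : ‖1 - ρ‖ < 1 := by
    rw [Real.norm_eq_abs, abs_lt]
    constructor <;> linarith
  have hsum := hasSum_natCast_mul_of_const_then_geometric hq hu_low
    (fun j hj => by rw [hu_high j hj, mul_div_assoc])
  have hgauss : ((n * (n + 1) / 2 : ℕ) : ℝ) = n * (n + 1) / 2 := by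
    rw [Nat.cast_div_charZero (Nat.even_mul_succ_self n).two_dvd]
    push_cast
    ring
  rw [hsum.tsum_eq, hgauss, Nat.cast_add_one, sub_sub_cancel,
    show (n : ℝ) * ρ + 1 - ρ = (n - 1) * ρ + 1 by ring]
  -- No `D ≠ 0` is needed: if `D = 0`, both sides are `0` by the convention `x / 0 = 0`.
  generalize ((n : ℝ) - 1) * ρ + 1 = D
  field_simp
  ring

theorem stmt9 (ρ : ℝ) (hρ : 0 < ρ) (hρ1 : ρ ≤ 1) (n : ℕ) (hn : 1 ≤ n)
    (u : ℕ → ℝ)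
    (hu0 : u 0 = 0)
    (hu_low : ∀ j, 1 ≤ j → j ≤ n → u j = ρ / (n * ρ + 1 - ρ))
    (hu_high : ∀ j, n < j → u j = (1 - ρ) ^ (j - n) * ρ / (n * ρ + 1 - ρ)) :
    ((((n : ℝ) - 1) ^ 2 + ((n : ℝ) - 1)) * ρ ^ 2 + 2 * ρ * ((n : ℝ) - 1) + 2) /
        (2 * ρ * (((n : ℝ) - 1) * ρ + 1))
      = ∑' j : ℕ, (j : ℝ) * u j :=
  stmt9_general ρ hρ hρ1 n u hu_low hu_high
end

section
/- Fix 0 < ρ ≤ 1. Define ā(n) = ([(n-1)²+(n-1)]ρ² + 2ρ(n-1) + 2)/(2ρ((n-1)ρ+1)) and d̄(n) = 1/(nρ+1-ρ). Then for each n ≥ 1, (ā(n+1) - ā(n))/(d̄(n) - d̄(n+1)) = n(n-1)ρ/2 + n. -/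
/-!
Write `u = (n - 1)ρ + 1`, so that `d̄(n) = 1/u` and passing from `n` to `n + 1` replaces `u` by
`u + ρ`. The numerator of `ā(n)` is `u² + ρu + 1 - ρ`, hence `2ρ ā(n) = u + ρ + (1 - ρ)/u`.
Both increments are then differences of reciprocals at `u` and `u + ρ`, and their ratio is
`(u(u + ρ) - (1 - ρ))/(2ρ)`, which is `n(n - 1)ρ/2 + n` when written back in terms of `n`.
-/

lemma avgAge_eq_add_div {ρ x : ℝ} (hu : x * ρ + 1 ≠ 0) :
    ((x ^ 2 + x) * ρ ^ 2 + 2 * ρ * x + 2) / (2 * ρ * (x * ρ + 1)) =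
      (x * ρ + 1 + ρ + (1 - ρ) / (x * ρ + 1)) / (2 * ρ) := by
  rw [add_div' _ _ _ hu, div_div, mul_comm (x * ρ + 1)]
  congr 1
  ring

lemma one_div_sub_one_div_add {ρ u : ℝ} (hu : u ≠ 0) (hu' : u + ρ ≠ 0) :
    1 / u - 1 / (u + ρ) = ρ / (u * (u + ρ)) := by
  rw [div_sub_div _ _ hu hu']
  ring

lemma avgAge_increment_div_activation_decrement {ρ u : ℝ} (hρ : ρ ≠ 0) (hu : u ≠ 0)
    (hu' : u + ρ ≠ 0) :
    ((u + ρ + ρ + (1 - ρ) / (u + ρ)) / (2 * ρ) - (u + ρ + (1 - ρ) / u) / (2 * ρ)) /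
        (1 / u - 1 / (u + ρ)) = (u * (u + ρ) - (1 - ρ)) / (2 * ρ) := by
  rw [one_div_sub_one_div_add hu hu']
  field_simp
  ring

theorem stmt10_general (ρ : ℝ) (hρ : 0 < ρ)
    (a d : ℕ → ℝ)
    (ha : ∀ n : ℕ, a n =
      ((((n : ℝ) - 1) ^ 2 + ((n : ℝ) - 1)) * ρ ^ 2 + 2 * ρ * ((n : ℝ) - 1) + 2) /
        (2 * ρ * (((n : ℝ) - 1) * ρ + 1)))
    (hd : ∀ n : ℕ, d n = 1 / ((n : ℝ) * ρ + 1 - ρ)) :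
    ∀ n : ℕ, 1 ≤ n →
      (a (n + 1) - a n) / (d n - d (n + 1)) = (n : ℝ) * ((n : ℝ) - 1) * ρ / 2 + n := by
  intro n hn
  have hn1 : (0 : ℝ) ≤ n - 1 := sub_nonneg.mpr (by exact_mod_cast hn)
  set u := ((n : ℝ) - 1) * ρ + 1
  have hu : 0 < u := by positivity
  have hu' : 0 < u + ρ := by positivity
  have ha_succ : a (n + 1) = (u + ρ + ρ + (1 - ρ) / (u + ρ)) / (2 * ρ) := by
    rw [ha, Nat.cast_succ, add_sub_cancel_right, avgAge_eq_add_div (by linarith)]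
    congr 3 <;> ring
  have hd_succ : d (n + 1) = 1 / (u + ρ) := by
    rw [hd, Nat.cast_succ]
    congr 1
    ring
  have hd_self : d n = 1 / u := by
    rw [hd]
    congr 1
    ring
  rw [ha_succ, ha, avgAge_eq_add_div hu.ne', hd_self, hd_succ,
    avgAge_increment_div_activation_decrement hρ.ne' hu.ne' hu'.ne']
  field_simp
  ring

theorem stmt10 (ρ : ℝ) (hρ : 0 < ρ) (hρ1 : ρ ≤ 1)
    (a d : ℕ → ℝ)
    (ha : ∀ n : ℕ, a n =
      ((((n : ℝ) - 1) ^ 2 + ((n : ℝ) - 1)) * ρ ^ 2 + 2 * ρ * ((n : ℝ) - 1) + 2) /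
        (2 * ρ * (((n : ℝ) - 1) * ρ + 1)))
    (hd : ∀ n : ℕ, d n = 1 / ((n : ℝ) * ρ + 1 - ρ)) :
    ∀ n : ℕ, 1 ≤ n →
      (a (n + 1) - a n) / (d n - d (n + 1)) = (n : ℝ) * ((n : ℝ) - 1) * ρ / 2 + n :=
  stmt10_general ρ hρ a d ha hd
end

section
/- Let N ≥ 2 be an integer, 0 < r < 1, 0 < ρ ≤ 1, and 0 ≤ 1 - Nr ≤ 1 - r (i.e., p ≥ r where p = 1-(N-1)r). Suppose a sequence W(n) satisfies W(n+1) - W(n) = (nρ+1)·[(1-r)^(n+2) - (1-Nr)^(n+2)] + (nρ+1)(1-ρ)r/(1-(1-ρ)(1-r))·[N(1-Nr)^(n+2) - (1-r)^(n+2)]. Then W(n+1) - W(n) ≥ (nρ+1)·(ρ/(1-(1-ρ)(1-r)))·[(1-r)^(n+2) - (1-Nr)^(n+2)] ≥ 0; in particular W is nondecreasing in n. -/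
section IncrementBound

variable {a b c N r ρ : ℝ}

lemma one_sub_mul_one_sub_pos (hρ : 0 < ρ) (hρ1 : ρ ≤ 1) (hr : 0 ≤ r) :
    0 < 1 - (1 - ρ) * (1 - r) := by
  nlinarith

/-- The key identity is `(1 - (1 - ρ) * (1 - r)) - (1 - ρ) * r = ρ`. -/
lemma increment_eq (hD : 1 - (1 - ρ) * (1 - r) ≠ 0) :
    c * (a - b) + c * (1 - ρ) * r / (1 - (1 - ρ) * (1 - r)) * (N * b - a) =
      c * (ρ / (1 - (1 - ρ) * (1 - r))) * (a - b) +
        c * (1 - ρ) * ((N - 1) * r) * b / (1 - (1 - ρ) * (1 - r)) := by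
  field_simp
  ring

lemma increment_ge (hc : 0 ≤ c) (hρ : 0 < ρ) (hρ1 : ρ ≤ 1) (hr : 0 ≤ r) (hb : 0 ≤ b)
    (hNr : r ≤ N * r) :
    c * (ρ / (1 - (1 - ρ) * (1 - r))) * (a - b) ≤
      c * (a - b) + c * (1 - ρ) * r / (1 - (1 - ρ) * (1 - r)) * (N * b - a) := by
  have hD := one_sub_mul_one_sub_pos hρ hρ1 hr
  rw [increment_eq hD.ne']
  refine le_add_of_nonneg_right (div_nonneg (mul_nonneg (mul_nonneg ?_ ?_) hb) hD.le)
  · exact mul_nonneg hc (sub_nonneg.2 hρ1)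
  · nlinarith

end IncrementBound

theorem stmt13_general (N : ℕ) (r ρ : ℝ) (hr : 0 < r)
    (hρ : 0 < ρ) (hρ1 : ρ ≤ 1)
    (hNr0 : 0 ≤ 1 - (N : ℝ) * r) (hNr1 : 1 - (N : ℝ) * r ≤ 1 - r)
    (W : ℕ → ℝ)
    (hW : ∀ n : ℕ, W (n + 1) - W n =
      ((n : ℝ) * ρ + 1) * ((1 - r) ^ (n + 2) - (1 - N * r) ^ (n + 2)) +
      ((n : ℝ) * ρ + 1) * (1 - ρ) * r / (1 - (1 - ρ) * (1 - r)) *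
        ((N : ℝ) * (1 - N * r) ^ (n + 2) - (1 - r) ^ (n + 2))) :
    ∀ n : ℕ,
      W (n + 1) - W n ≥
        ((n : ℝ) * ρ + 1) * (ρ / (1 - (1 - ρ) * (1 - r))) *
          ((1 - r) ^ (n + 2) - (1 - N * r) ^ (n + 2)) ∧
      ((n : ℝ) * ρ + 1) * (ρ / (1 - (1 - ρ) * (1 - r))) *
          ((1 - r) ^ (n + 2) - (1 - N * r) ^ (n + 2)) ≥ 0 ∧
      W n ≤ W (n + 1) := by
  intro n
  have hc : 0 ≤ (n : ℝ) * ρ + 1 := by positivity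
  have hD := one_sub_mul_one_sub_pos hρ hρ1 hr.le
  have hgap : 0 ≤ (1 - r) ^ (n + 2) - (1 - N * r) ^ (n + 2) :=
    sub_nonneg.2 (pow_le_pow_left₀ hNr0 hNr1 _)
  have hlower := increment_ge (a := (1 - r) ^ (n + 2)) hc hρ hρ1 hr.le
    (pow_nonneg hNr0 (n + 2)) (show r ≤ (N : ℝ) * r by linarith)
  have hnonneg := mul_nonneg (mul_nonneg hc (div_nonneg hρ.le hD.le)) hgap
  rw [← hW n] at hlower
  exact ⟨hlower, hnonneg, sub_nonneg.1 (hnonneg.trans hlower)⟩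

theorem stmt13 (N : ℕ) (r ρ : ℝ) (hN : 2 ≤ N) (hr : 0 < r) (hr1 : r < 1)
    (hρ : 0 < ρ) (hρ1 : ρ ≤ 1)
    (hNr0 : 0 ≤ 1 - (N : ℝ) * r) (hNr1 : 1 - (N : ℝ) * r ≤ 1 - r)
    (W : ℕ → ℝ)
    (hW : ∀ n : ℕ, W (n + 1) - W n =
      ((n : ℝ) * ρ + 1) * ((1 - r) ^ (n + 2) - (1 - N * r) ^ (n + 2)) +
      ((n : ℝ) * ρ + 1) * (1 - ρ) * r / (1 - (1 - ρ) * (1 - r)) *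
        ((N : ℝ) * (1 - N * r) ^ (n + 2) - (1 - r) ^ (n + 2))) :
    ∀ n : ℕ,
      W (n + 1) - W n ≥
        ((n : ℝ) * ρ + 1) * (ρ / (1 - (1 - ρ) * (1 - r))) *
          ((1 - r) ^ (n + 2) - (1 - N * r) ^ (n + 2)) ∧
      ((n : ℝ) * ρ + 1) * (ρ / (1 - (1 - ρ) * (1 - r))) *
          ((1 - r) ^ (n + 2) - (1 - N * r) ^ (n + 2)) ≥ 0 ∧
      W n ≤ W (n + 1) :=
  stmt13_general N r ρ hr hρ hρ1 hNr0 hNr1 W hW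
end

section
/- Let 0 < r < 1, N ≥ 2, Nr ≤ 1, and define for j ≥ 1: b^j = Σ_{k=0}^{j} k·(1-p)·(1-r)^(k-1)·π^(j-k) where p = 1-(N-1)r, π^0 = 1, π^(m+1) = p·π^m + r·(1-π^m). Then b^j = ((N-1)/(Nr))·(1 - (j+1)(1-r)^j + j(1-r)^(j+1)) + (1/(Nr))·((p-r)^(j+1) - (j+1)(1-r)^j(p-r) + j(1-r)^(j+1)). -/
/-- Belief sequence: `π⁰ = 1`, `π^(m+1) = p·π^m + r·(1 - π^m)`. -/
def piSeq (p r : ℝ) : ℕ → ℝ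
  | 0 => 1
  | k + 1 => p * piSeq p r k + r * (1 - piSeq p r k)

lemma pi_closed (N : ℕ) (r p : ℝ) (hN : 2 ≤ N) (hp : p = 1 - ((N : ℝ) - 1) * r) :
    ∀ m : ℕ, piSeq p r m = 1 / N + (1 - 1 / N) * (p - r) ^ m := by
  have hN0 : (N : ℝ) ≠ 0 := by positivity
  subst hp
  intro m
  induction m with
  | zero => simp [piSeq]
  | succ m ih =>
      simp only [piSeq, ih]
      field_simp
      ring

lemma sum_aux1 (x : ℝ) (j : ℕ) :
    (1 - x) ^ 2 * ∑ k ∈ Finset.range (j + 1), (k : ℝ) * x ^ (k - 1)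
      = 1 - (j + 1 : ℝ) * x ^ j + (j : ℝ) * x ^ (j + 1) := by
  induction j with
  | zero => simp
  | succ j ih =>
      rw [Finset.sum_range_succ]
      simp only [Nat.add_sub_cancel]
      push_cast
      linear_combination ih

lemma sum_aux2 (x q : ℝ) (j : ℕ) :
    (x - q) ^ 2 * ∑ k ∈ Finset.range (j + 1), (k : ℝ) * x ^ (k - 1) * q ^ (j - k)
      = (j + 1 : ℝ) * x ^ j * (x - q) - x ^ (j + 1) + q ^ (j + 1) := by
  induction j with
  | zero => simp
  | succ j ih =>
      rw [Finset.sum_range_succ]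
      have hsplit : ∑ k ∈ Finset.range (j + 1), (k : ℝ) * x ^ (k - 1) * q ^ (j + 1 - k)
          = q * ∑ k ∈ Finset.range (j + 1), (k : ℝ) * x ^ (k - 1) * q ^ (j - k) := by
        rw [Finset.mul_sum]
        refine Finset.sum_congr rfl fun k hk => ?_
        have hk' : k ≤ j := Nat.lt_succ_iff.mp (Finset.mem_range.mp hk)
        rw [Nat.succ_sub hk', pow_succ]
        ring
      rw [hsplit]
      simp only [Nat.add_sub_cancel, Nat.sub_self, pow_zero]
      push_cast
      linear_combination q * ih

theorem stmt17 (N : ℕ) (r : ℝ) (hN : 2 ≤ N) (hr : 0 < r) (hr1 : r < 1)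
    (hNr : (N : ℝ) * r ≤ 1)
    (p : ℝ) (hp : p = 1 - ((N : ℝ) - 1) * r)
    (b : ℕ → ℝ)
    (hb : ∀ j : ℕ, b j =
      ∑ k ∈ Finset.range (j + 1),
        (k : ℝ) * (1 - p) * (1 - r) ^ (k - 1) * piSeq p r (j - k)) :
    ∀ j : ℕ, 1 ≤ j →
      b j =
        ((N - 1 : ℝ) / ((N : ℝ) * r)) *
          (1 - (j + 1 : ℝ) * (1 - r) ^ j + (j : ℝ) * (1 - r) ^ (j + 1)) +
        (1 / ((N : ℝ) * r)) *
          ((p - r) ^ (j + 1) - (j + 1 : ℝ) * (1 - r) ^ j * (p - r) +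
            (j : ℝ) * (1 - r) ^ (j + 1)) := by
  intro j hj
  have hN0 : (N : ℝ) ≠ 0 := by positivity
  have hN1 : (N : ℝ) - 1 ≠ 0 := by
    have : (2 : ℝ) ≤ N := by exact_mod_cast hN
    nlinarith
  have hr0 : r ≠ 0 := ne_of_gt hr
  have hbj := hb j
  have hsum : b j = (1 - p) * (1 / N) * (∑ k ∈ Finset.range (j + 1), (k : ℝ) * (1 - r) ^ (k - 1))
      + (1 - p) * (1 - 1 / N) *
        (∑ k ∈ Finset.range (j + 1), (k : ℝ) * (1 - r) ^ (k - 1) * (p - r) ^ (j - k)) := by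
    rw [hbj, Finset.mul_sum, Finset.mul_sum, ← Finset.sum_add_distrib]
    refine Finset.sum_congr rfl fun k hk => ?_
    rw [pi_closed N r p hN hp]
    ring
  have h1 := sum_aux1 (1 - r) j
  have h2 := sum_aux2 (1 - r) (p - r) j
  have hq : (1 - r) - (p - r) = ((N : ℝ) - 1) * r := by rw [hp]; ring
  rw [hq] at h2
  have hS1 : ∑ k ∈ Finset.range (j + 1), (k : ℝ) * (1 - r) ^ (k - 1)
      = (1 - (j + 1 : ℝ) * (1 - r) ^ j + (j : ℝ) * (1 - r) ^ (j + 1)) / r ^ 2 := by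
    rw [eq_div_iff (by positivity), ← h1]; ring
  have hS2 : ∑ k ∈ Finset.range (j + 1), (k : ℝ) * (1 - r) ^ (k - 1) * (p - r) ^ (j - k)
      = ((j + 1 : ℝ) * (1 - r) ^ j * (((N : ℝ) - 1) * r) - (1 - r) ^ (j + 1) + (p - r) ^ (j + 1))
        / (((N : ℝ) - 1) * r) ^ 2 := by
    rw [eq_div_iff (by positivity), ← h2]; ring
  rw [hsum, hS1, hS2, hp]
  field_simp
  ring
end

section
/- Let 0 < ρ ≤ 1 and let (b^j)_{j≥1} be a strictly increasing real sequence. Consider the value iteration V_0 ≡ 0 and V_{t+1}(b^j) = min{ b^j + V_t(b^(j+1)), b^j + W + ρ·V_t(b^1) + (1-ρ)·V_t(b^(j+1)) } − θ_t (for some constants θ_t, W ≥ 0). Then for every t, V_t is nondecreasing as a function of b^j, i.e., j ≤ i implies V_t(b^j) ≤ V_t(b^i). -/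
/-! Induction on `t`: both branches of the minimum are nondecreasing in the cost `b j` and in the
next value `V t (j + 1)` (the weight `1 - ρ` being nonnegative), and the term `ρ * V t 1` does not
depend on `j`. -/

theorem min_add_le_min_add_convex_comb {ρ w c b b' x x' : ℝ} (hρ1 : ρ ≤ 1)
    (hb : b ≤ b') (hx : x ≤ x') :
    min (b + x) (b + w + ρ * c + (1 - ρ) * x) ≤
      min (b' + x') (b' + w + ρ * c + (1 - ρ) * x') := by
  have hρx : (1 - ρ) * x ≤ (1 - ρ) * x' := mul_le_mul_of_nonneg_left hx (by linarith)
  exact min_le_min (by linarith) (by linarith)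

theorem stmt19_general (ρ W : ℝ) (hρ1 : ρ ≤ 1)
    (b : ℕ → ℝ) (hb : ∀ j : ℕ, 1 ≤ j → b j < b (j + 1))
    (θ : ℕ → ℝ) (V : ℕ → ℕ → ℝ)
    (hV0 : ∀ j, V 0 j = 0)
    (hVrec : ∀ t j, 1 ≤ j →
      V (t + 1) j =
        min (b j + V t (j + 1))
          (b j + W + ρ * V t 1 + (1 - ρ) * V t (j + 1)) - θ t) :
    ∀ t j i : ℕ, 1 ≤ j → j ≤ i → V t j ≤ V t i := by
  have hb_mono : MonotoneOn b (Set.Ici 1) :=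
    monotoneOn_nat_Ici_of_le_succ fun j hj => (hb j hj).le
  suffices hV_mono : ∀ t, MonotoneOn (V t) (Set.Ici 1) from
    fun t j i hj hji => hV_mono t hj (hj.trans hji) hji
  intro t
  induction t with
  | zero => intro j _ i _ _; rw [hV0, hV0]
  | succ t ih =>
    intro j hj i hi hji
    rw [hVrec t j hj, hVrec t i hi]
    have hV_next : V t (j + 1) ≤ V t (i + 1) :=
      ih (Nat.le_succ_of_le hj) (Nat.le_succ_of_le hi) (Nat.succ_le_succ hji)
    exact sub_le_sub_right
      (min_add_le_min_add_convex_comb hρ1 (hb_mono hj hi hji) hV_next) _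

theorem stmt19 (ρ W : ℝ) (hρ : 0 < ρ) (hρ1 : ρ ≤ 1) (hW : 0 ≤ W)
    (b : ℕ → ℝ) (hb : ∀ j : ℕ, 1 ≤ j → b j < b (j + 1))
    (θ : ℕ → ℝ) (V : ℕ → ℕ → ℝ)
    (hV0 : ∀ j, V 0 j = 0)
    (hVrec : ∀ t j, 1 ≤ j →
      V (t + 1) j =
        min (b j + V t (j + 1))
          (b j + W + ρ * V t 1 + (1 - ρ) * V t (j + 1)) - θ t) :
    ∀ t j i : ℕ, 1 ≤ j → j ≤ i → V t j ≤ V t i :=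
  stmt19_general ρ W hρ1 b hb θ V hV0 hVrec
end
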